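/- Suppose each Φᵢ (i = 1,…,k) is a triangular system for (X, cl), and let A ⊆ X be finite and B ⊆ X. Then the function f^Φ_{A|B} : ℕ^m → ℕ is decreasing: ū ≼ ū′ implies f^Φ_{A|B}(ū′) ≤ f^Φ_{A|B}(ū). Moreover, Σ_{ū ∈ ℕ^m, ‖ū‖ = s̄} f^Φ_{A|B}(ū) = rk(Φ^{(s̄)}(A) | Φ^{(s̄)}(B)) for every s̄ ∈ ℕ^k. -/

import Mathlib

/-!
Apply `φᵢⱼ` to a basis of `φ^ū(A)` over `Θ_ū(A) ∪ Φ^{(‖ū‖)}(B)`. By triangularity the images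
span `φ^{ū+eᵢⱼ}(A)` over `Θ_{ū+eᵢⱼ}(A) ∪ Φ^{(‖ū‖+eᵢ)}(B)`, since `φᵢⱼ'` with `j' ≤ j` moves
`Θ_ū(A)`, and `φ^ū(A)` itself when `j' < j`, into `Θ_{ū+eᵢⱼ}(A)`. So `f` decreases along unit
steps, hence is decreasing. `<_lex` is a translation-invariant linear order on `ℕ^m` (Mathlib's
lexicographic order with the indices reversed), and the sum formula is additivity of rank along
the exponents of norm `s̄` listed in `<_lex`-order.
-/

open Set

/-- A finitary matroid (pregeometry): a closure operator satisfying monotonicity,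
idempotence, finite character and Steinitz exchange. -/
structure FinMatroid (X : Type*) where
  cl : Set X → Set X
  subset_cl : ∀ A : Set X, A ⊆ cl A
  cl_mono : ∀ ⦃A B : Set X⦄, A ⊆ B → cl A ⊆ cl B
  cl_idem : ∀ A : Set X, cl (cl A) = cl A
  cl_finChar : ∀ (A : Set X) (a : X), a ∈ cl A → ∃ A₀ ⊆ A, A₀.Finite ∧ a ∈ cl A₀
  cl_exchange : ∀ (a b : X) (A : Set X), a ∈ cl (A ∪ {b}) → a ∉ cl A → b ∈ cl (A ∪ {a})

namespace FinMatroid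

variable {X : Type*}

/-- `B` is `cl`-independent over `A`. -/
def Indep (M : FinMatroid X) (A B : Set X) : Prop :=
  ∀ b ∈ B, b ∉ M.cl (A ∪ (B \ {b}))

/-- `B₀` is a basis for `B` over `A`. -/
def IsBasisOver (M : FinMatroid X) (A B B₀ : Set X) : Prop :=
  B₀ ⊆ B ∧ M.Indep A B₀ ∧ B ⊆ M.cl (A ∪ B₀)

/-- The rank `rk(B|A)`: the common cardinality of bases of `B` over `A`. -/
noncomputable def rk (M : FinMatroid X) (B A : Set X) : ℕ :=
  sInf {n : ℕ | ∃ B₀ : Set X, M.IsBasisOver A B B₀ ∧ B₀.ncard = n}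

end FinMatroid

/-- `ψ` is a triangular system for the finitary matroid `M`. -/
def Triangular {X : Type*} (M : FinMatroid X) {n : ℕ} (ψ : Fin n → X → X) : Prop :=
  ∀ (i : Fin n) (a : X) (B : Set X), a ∈ M.cl B →
    ψ i a ∈ M.cl (⋃ j ∈ Finset.Iic i, (ψ j) '' B)

/-- `ψ` is quasi-triangular: the system augmented by the identity map is triangular. -/
def QuasiTriangular {X : Type*} (M : FinMatroid X) {n : ℕ} (ψ : Fin n → X → X) : Prop :=
  Triangular M (Fin.cons id ψ)

/-- The composite operator `φ^r̄ = φ₁^{r₁} ∘ ⋯ ∘ φ_m^{r_m}` (operators indexed by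
pairs `(i, j)` with `i : Fin k`, `j : Fin (d i)`). -/
def opPow {X : Type*} {k : ℕ} {d : Fin k → ℕ} (φ : ∀ i : Fin k, Fin (d i) → X → X)
    (r : ∀ i : Fin k, Fin (d i) → ℕ) : X → X :=
  (List.finRange k).foldr
    (fun i f => ((List.finRange (d i)).foldr (fun j g => (φ i j)^[r i j] ∘ g) id) ∘ f) id

/-- The operators pairwise commute. -/
def Commuting {X : Type*} {k : ℕ} {d : Fin k → ℕ}
    (φ : ∀ i : Fin k, Fin (d i) → X → X) : Prop :=
  ∀ i j i' j', Function.Commute (φ i j) (φ i' j')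

/-- `Φ^{(s̄)}(A)`: images of elements of `A` under all `φ^r̄` with `‖r̄‖ = s̄`. -/
def PhiEq {X : Type*} {k : ℕ} {d : Fin k → ℕ} (φ : ∀ i : Fin k, Fin (d i) → X → X)
    (s : Fin k → ℕ) (A : Set X) : Set X :=
  {x | ∃ r : ∀ i : Fin k, Fin (d i) → ℕ,
    (∀ i, ∑ j, r i j = s i) ∧ ∃ a ∈ A, x = opPow φ r a}

/-- `Φ^{≼(s̄)}(A)`: images of elements of `A` under all `φ^r̄` with `‖r̄‖ ≼ s̄`. -/
def PhiLe {X : Type*} {k : ℕ} {d : Fin k → ℕ} (φ : ∀ i : Fin k, Fin (d i) → X → X)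
    (s : Fin k → ℕ) (A : Set X) : Set X :=
  {x | ∃ r : ∀ i : Fin k, Fin (d i) → ℕ,
    (∀ i, ∑ j, r i j ≤ s i) ∧ ∃ a ∈ A, x = opPow φ r a}

/-- `|Φ^{(s̄)}|`: the number of `r̄ ∈ ℕ^m` with `‖r̄‖ = s̄`. -/
noncomputable def cntEq {k : ℕ} (d : Fin k → ℕ) (s : Fin k → ℕ) : ℕ :=
  Nat.card {r : ∀ i : Fin k, Fin (d i) → ℕ // ∀ i, ∑ j, r i j = s i}

/-- `|Φ^{≼(s̄)}|`: the number of `r̄ ∈ ℕ^m` with `‖r̄‖ ≼ s̄`. -/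
noncomputable def cntLe {k : ℕ} (d : Fin k → ℕ) (s : Fin k → ℕ) : ℕ :=
  Nat.card {r : ∀ i : Fin k, Fin (d i) → ℕ // ∀ i, ∑ j, r i j ≤ s i}

/-- `Θ(A)`: images of elements of `A` under all the operators `φ^r̄`, `r̄ ∈ ℕ^m`. -/
def Theta {X : Type*} {k : ℕ} {d : Fin k → ℕ} (φ : ∀ i : Fin k, Fin (d i) → X → X)
    (A : Set X) : Set X :=
  {x | ∃ r : ∀ i : Fin k, Fin (d i) → ℕ, ∃ a ∈ A, x = opPow φ r a}

/-- The `Φ`-closure operator. -/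
noncomputable def clPhi {X : Type*} {k : ℕ} {d : Fin k → ℕ} (M : FinMatroid X)
    (φ : ∀ i : Fin k, Fin (d i) → X → X) (B : Set X) : Set X :=
  {a | ∃ s : Fin k → ℕ, M.rk (PhiEq φ s {a}) (PhiEq φ s B) < cntEq d s}

/-- The `Φ*`-closure operator. -/
noncomputable def clPhiStar {X : Type*} {k : ℕ} {d : Fin k → ℕ} (M : FinMatroid X)
    (φ : ∀ i : Fin k, Fin (d i) → X → X) (B : Set X) : Set X :=
  {a | ∃ s : Fin k → ℕ, M.rk (PhiLe φ s {a}) (PhiLe φ s B) < cntLe d s}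

/-- View a function `Fin k → ℕ` as a monomial exponent. -/
noncomputable def expOf {k : ℕ} (e : Fin k → ℕ) : Fin k →₀ ℕ :=
  Finsupp.equivFunOnFinite.symm e

/-- The lexicographic order on `ℕ^m` with emphasis on the last coordinate, for
exponents indexed by pairs `(i, j)` (`i : Fin k` major, `j : Fin (d i)` minor):
`r <_lex u` iff at some position `r` is smaller and they agree at all later
positions. -/
def lexLtOp {k : ℕ} {d : Fin k → ℕ} (r u : ∀ i : Fin k, Fin (d i) → ℕ) : Prop :=
  ∃ (i : Fin k) (j : Fin (d i)), r i j < u i j ∧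
    (∀ j' : Fin (d i), j < j' → r i j' = u i j') ∧
    (∀ i' : Fin k, i < i' → ∀ j' : Fin (d i'), r i' j' = u i' j')

/-- `Θ_ū(A)`: images of elements of `A` under the operators `φ^r̄` with
`‖r̄‖ = ‖ū‖` and `r̄ <_lex ū`. -/
def ThetaU {X : Type*} {k : ℕ} {d : Fin k → ℕ} (φ : ∀ i : Fin k, Fin (d i) → X → X)
    (u : ∀ i : Fin k, Fin (d i) → ℕ) (A : Set X) : Set X :=
  {x | ∃ r : ∀ i : Fin k, Fin (d i) → ℕ,
    (∀ i, ∑ j, r i j = ∑ j, u i j) ∧ lexLtOp r u ∧ ∃ a ∈ A, x = opPow φ r a}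

/-- The function `f^Φ_{A|B}(ū) = rk(φ^ū(A) | Θ_ū(A) ∪ Φ^{(‖ū‖)}(B))`. -/
noncomputable def fDim {X : Type*} {k : ℕ} {d : Fin k → ℕ} (M : FinMatroid X)
    (φ : ∀ i : Fin k, Fin (d i) → X → X) (A B : Set X)
    (u : ∀ i : Fin k, Fin (d i) → ℕ) : ℕ :=
  M.rk (opPow φ u '' A) (ThetaU φ u A ∪ PhiEq φ (fun i => ∑ j, u i j) B)

namespace FinMatroid

variable {X : Type*} (M : FinMatroid X)

lemma cl_subset_cl {A B : Set X} (h : A ⊆ M.cl B) : M.cl A ⊆ M.cl B :=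
  M.cl_idem B ▸ M.cl_mono h

variable {M}

lemma Indep.subset {D I J : Set X} (hI : M.Indep D I) (hJI : J ⊆ I) : M.Indep D J :=
  fun b hb hbcl => hI b (hJI hb)
    (M.cl_mono (union_subset_union_right _ (sdiff_subset_sdiff_left hJI)) hbcl)

lemma Indep.anti {D D' I : Set X} (hI : M.Indep D I) (hD : D' ⊆ D) : M.Indep D' I :=
  fun b hb hbcl => hI b hb (M.cl_mono (union_subset_union_left _ hD) hbcl)

lemma indep_insert_iff {D I : Set X} {c : X} (hc : c ∉ I) :
    M.Indep D (insert c I) ↔ M.Indep D I ∧ c ∉ M.cl (D ∪ I) := by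
  refine ⟨fun h => ⟨h.subset (subset_insert c I), ?_⟩, fun ⟨hI, hcI⟩ b hb hbcl => ?_⟩
  · simpa [insert_sdiff_self_of_notMem hc] using h c (mem_insert c I)
  rcases hb with rfl | hbI
  · exact hcI (by rwa [insert_sdiff_self_of_notMem hc] at hbcl)
  have hbc : b ≠ c := by rintro rfl; exact hc hbI
  -- Steinitz exchange of `b` for `c` would put `c` into the closure of `D ∪ I`
  have hsplit : D ∪ (insert c I \ {b}) = (D ∪ (I \ {b})) ∪ {c} := by
    rw [insert_sdiff_of_notMem _ (by simpa using hbc.symm), union_singleton, union_insert]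
  rw [hsplit] at hbcl
  refine hcI (M.cl_mono ?_ (M.cl_exchange b c _ hbcl (hI b hbI)))
  rw [union_assoc, sdiff_union_self, union_eq_self_of_subset_right (singleton_subset_iff.2 hbI)]

lemma Indep.union {D I J : Set X} (hI : M.Indep (D ∪ J) I) (hJ : M.Indep D J)
    (hIJ : Disjoint I J) (hIfin : I.Finite) : M.Indep D (I ∪ J) := by
  induction I, hIfin using Set.Finite.induction_on with
  | empty => rwa [empty_union]
  | @insert c I hcI _ ih =>
    rw [indep_insert_iff hcI] at hI
    have hcJ : c ∉ J := disjoint_left.1 hIJ (mem_insert c I)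
    rw [insert_union, indep_insert_iff (by simp [hcI, hcJ])]
    refine ⟨ih hI.1 (hIJ.mono_left (subset_insert c I)), ?_⟩
    simpa only [union_assoc, union_comm J] using hI.2

/-- Induction on `|S \ I|`: an element of `S \ I` is dropped or exchanged for one of `I`. -/
lemma Indep.ncard_le {D I S : Set X} (hI : M.Indep D I) (hS : S.Finite)
    (hIS : I ⊆ M.cl (D ∪ S)) : I.ncard ≤ S.ncard := by
  induction hn : (S \ I).ncard using Nat.strong_induction_on generalizing S with
  | _ n ih =>
  by_cases hSI : S ⊆ I
  · refine ncard_le_ncard (fun b hb => ?_) hS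
    by_contra hbS
    exact hI b hb
      (M.cl_mono (union_subset_union_right D (subset_sdiff_singleton hSI hbS)) (hIS hb))
  obtain ⟨s, hsS, hsI⟩ := not_subset.1 hSI
  have hlt : ((S \ {s}) \ I).ncard < (S \ I).ncard := by
    rw [sdiff_sdiff_comm]
    exact ncard_sdiff_singleton_lt_of_mem ⟨hsS, hsI⟩ hS.sdiff
  obtain ⟨S', hS', hS'S, hS'I, hIS'⟩ : ∃ S', S'.Finite ∧ S'.ncard ≤ S.ncard ∧
      (S' \ I).ncard < (S \ I).ncard ∧ I ⊆ M.cl (D ∪ S') := by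
    by_cases h : I ⊆ M.cl (D ∪ (S \ {s}))
    · exact ⟨S \ {s}, hS.sdiff, ncard_sdiff_singleton_le S s, hlt, h⟩
    obtain ⟨x, hxI, hx⟩ := not_subset.1 h
    refine ⟨insert x (S \ {s}), hS.sdiff.insert x, ?_, ?_, fun y hy => ?_⟩
    · rw [← ncard_sdiff_singleton_add_one hsS hS]
      exact ncard_insert_le x _
    · rwa [insert_sdiff_of_mem _ hxI]
    · have hDS : D ∪ S = (D ∪ (S \ {s})) ∪ {s} := by
        rw [union_assoc, sdiff_union_self,
          union_eq_self_of_subset_right (singleton_subset_iff.2 hsS)]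
      have hs := M.cl_exchange x s _ (hDS ▸ hIS hxI) hx
      refine M.cl_subset_cl (fun z hz => ?_) (hIS hy)
      rw [hDS] at hz
      rcases hz with hz | rfl
      · exact M.subset_cl _ (union_subset_union_right D (subset_insert x _) hz)
      · exact M.cl_mono (by rw [union_singleton, union_insert]) hs
  exact (ih _ (hn ▸ hS'I) hS' hIS' rfl).trans hS'S

lemma exists_isBasisOver (D : Set X) {C : Set X} (hC : C.Finite) :
    ∃ B₀, M.IsBasisOver D C B₀ := by
  obtain ⟨B₀, ⟨hB₀C, hB₀⟩, hmax⟩ := (hC.finite_subsets.subset fun B hB => hB.1).exists_maximal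
    (⟨∅, empty_subset C, fun b hb => hb.elim⟩ : {B | B ⊆ C ∧ M.Indep D B}.Nonempty)
  refine ⟨B₀, hB₀C, hB₀, fun c hcC => ?_⟩
  by_contra hc
  have hcB₀ : c ∉ B₀ := fun h => hc (M.subset_cl _ (Or.inr h))
  exact hcB₀ (hmax ⟨insert_subset hcC hB₀C, (indep_insert_iff hcB₀).2 ⟨hB₀, hc⟩⟩
    (subset_insert c B₀) (mem_insert c B₀))

lemma IsBasisOver.rk_eq {D C B₀ : Set X} (hC : C.Finite) (hB : M.IsBasisOver D C B₀) :
    M.rk C D = B₀.ncard :=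
  le_antisymm (Nat.sInf_le ⟨B₀, hB, rfl⟩) <| le_csInf ⟨_, B₀, hB, rfl⟩ <| by
    rintro n ⟨B₁, hB₁, rfl⟩
    exact hB.2.1.ncard_le (hC.subset hB₁.1) (hB.1.trans hB₁.2.2)

lemma rk_le_ncard {D C S : Set X} (hC : C.Finite) (hS : S.Finite) (h : C ⊆ M.cl (D ∪ S)) :
    M.rk C D ≤ S.ncard := by
  obtain ⟨B₀, hB⟩ := M.exists_isBasisOver D hC
  exact hB.rk_eq hC ▸ hB.2.1.ncard_le hS (hB.1.trans h)

lemma rk_empty (D : Set X) : M.rk ∅ D = 0 := by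
  have hB : M.IsBasisOver D ∅ ∅ := ⟨Subset.rfl, fun b hb => hb.elim, empty_subset _⟩
  rw [hB.rk_eq finite_empty, ncard_empty]

lemma rk_union {D C C' : Set X} (hC : C.Finite) (hC' : C'.Finite) :
    M.rk (C ∪ C') D = M.rk C (D ∪ C') + M.rk C' D := by
  obtain ⟨B', hB'C', hB', hC'B'⟩ := M.exists_isBasisOver D hC'
  obtain ⟨B, hBC, hB, hCB⟩ := M.exists_isBasisOver (D ∪ C') hC
  have hdisj : Disjoint B B' := disjoint_left.2 fun b hbB hbB' =>
    hB b hbB (M.subset_cl _ (Or.inl (Or.inr (hB'C' hbB'))))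
  have hspan : C ∪ C' ⊆ M.cl (D ∪ (B ∪ B')) := by
    have hC'span : C' ⊆ M.cl (D ∪ (B ∪ B')) :=
      hC'B'.trans (M.cl_mono (union_subset_union_right D subset_union_right))
    refine union_subset (hCB.trans (M.cl_subset_cl (union_subset (union_subset ?_ hC'span) ?_)))
      hC'span
    · exact subset_union_left.trans (M.subset_cl _)
    · exact subset_union_left.trans (subset_union_right.trans (M.subset_cl _))
  have hunion : M.IsBasisOver D (C ∪ C') (B ∪ B') :=
    ⟨union_subset_union hBC hB'C',
      (hB.anti (union_subset_union_right D hB'C')).union hB' hdisj (hC.subset hBC), hspan⟩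
  have hbasis : M.IsBasisOver (D ∪ C') C B := ⟨hBC, hB, hCB⟩
  have hbasis' : M.IsBasisOver D C' B' := ⟨hB'C', hB', hC'B'⟩
  rw [hunion.rk_eq (hC.union hC'), hbasis.rk_eq hC, hbasis'.rk_eq hC',
    ncard_union_eq hdisj (hC.subset hBC) (hC'.subset hB'C')]

lemma rk_biUnion_eq_sum {ι β : Type*} [DecidableEq ι] [LinearOrder β] {f : ι → β}
    (hf : Function.Injective f) {C : ι → Set X} (hC : ∀ u, (C u).Finite) (D : Set X)
    (U : Finset ι) :
    M.rk (⋃ u ∈ U, C u) D = ∑ u ∈ U, M.rk (C u) (D ∪ ⋃ r ∈ U.filter (f · < f u), C r) := by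
  refine Finset.induction_on_max_value f U (by simp [rk_empty]) fun a U haU hmax ih => ?_
  have hpred : ∀ u ∈ U, (insert a U).filter (f · < f u) = U.filter (f · < f u) := by
    intro u hu
    rw [Finset.filter_insert, if_neg (not_lt.2 (hmax u hu))]
  have hUa : (insert a U).filter (f · < f a) = U := by
    rw [Finset.filter_insert, if_neg (lt_irrefl _), Finset.filter_true_of_mem]
    exact fun u hu => (hmax u hu).lt_of_ne (hf.ne (by rintro rfl; exact haU hu))
  have hUfin : (⋃ u ∈ U, C u).Finite := U.finite_toSet.biUnion fun u _ => hC u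
  rw [Finset.set_biUnion_insert, M.rk_union (hC a) hUfin, ih, Finset.sum_insert haU, hUa]
  exact congrArg _ (Finset.sum_congr rfl fun u hu => by rw [hpred u hu])

end FinMatroid

section Foldr

variable {X ι : Type*}

lemma Function.Commute.foldr_comp {f : X → X} {F : ι → X → X} {l : List ι}
    (h : ∀ a ∈ l, Function.Commute f (F a)) :
    Function.Commute f (l.foldr (fun a g => F a ∘ g) id) := by
  induction l with
  | nil => exact fun _ => rfl
  | cons a t ih =>
    exact (h a List.mem_cons_self).comp_right (ih fun b hb => h b (List.mem_cons_of_mem a hb))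

lemma List.foldr_comp_add {N : ι → Type*} [∀ a, Add (N a)] (F : ∀ a, N a → X → X)
    (hadd : ∀ a n m, F a (n + m) = F a n ∘ F a m)
    (hcomm : ∀ a b n m, Function.Commute (F a n) (F b m)) (l : List ι) (n m : ∀ a, N a) :
    l.foldr (fun a g => F a (n a + m a) ∘ g) id =
      l.foldr (fun a g => F a (n a) ∘ g) id ∘ l.foldr (fun a g => F a (m a) ∘ g) id := by
  induction l with
  | nil => rfl
  | cons a t ih =>
    have hswap := (Function.Commute.foldr_comp (l := t) fun b _ => hcomm a b (m a) (n b)).comp_eq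
    simp only [List.foldr_cons]
    rw [ih, hadd, Function.comp_assoc, ← Function.comp_assoc (F a (m a)), hswap]
    rfl

lemma List.foldr_comp_eq_id {F : ι → X → X} {l : List ι} (h : ∀ a ∈ l, F a = id) :
    l.foldr (fun a g => F a ∘ g) id = id := by
  induction l with
  | nil => rfl
  | cons a t ih =>
    rw [List.foldr_cons, h a List.mem_cons_self, ih fun b hb => h b (List.mem_cons_of_mem a hb)]
    rfl

lemma List.foldr_comp_single [DecidableEq ι] {N : ι → Type*} [∀ a, Zero (N a)]
    (F : ∀ a, N a → X → X) (hzero : ∀ a, F a 0 = id) {l : List ι} (hl : l.Nodup) {a₀ : ι}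
    (ha : a₀ ∈ l) (x : N a₀) :
    l.foldr (fun a g => F a (Pi.single a₀ x a) ∘ g) id = F a₀ x := by
  induction l with
  | nil => simp at ha
  | cons a t ih =>
    obtain ⟨hat, ht⟩ := List.nodup_cons.1 hl
    rw [List.foldr_cons]
    rcases List.mem_cons.1 ha with rfl | ha
    · rw [Pi.single_eq_same, List.foldr_comp_eq_id fun b hb => ?_, Function.comp_id]
      rw [Pi.single_eq_of_ne (by rintro rfl; exact hat hb), hzero]
    · rw [Pi.single_eq_of_ne (by rintro rfl; exact hat ha), hzero, ih ht ha, Function.id_comp]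

end Foldr

section Exponents

variable {k : ℕ} {d : Fin k → ℕ}

/-- The norm `‖ū‖` of an exponent. -/
def blockSum (u : ∀ i : Fin k, Fin (d i) → ℕ) : Fin k → ℕ :=
  fun i => ∑ j, u i j

def unitExp (i : Fin k) (j : Fin (d i)) : ∀ i, Fin (d i) → ℕ :=
  Pi.single i (Pi.single j 1)

lemma blockSum_add (u v : ∀ i : Fin k, Fin (d i) → ℕ) :
    blockSum (u + v) = blockSum u + blockSum v :=
  funext fun _ => Finset.sum_add_distrib

lemma blockSum_unitExp (i : Fin k) (j : Fin (d i)) : blockSum (unitExp i j) = Pi.single i 1 := by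
  funext i'
  rcases eq_or_ne i' i with rfl | hi
  · simp [blockSum, unitExp]
  · simp [blockSum, unitExp, hi]

lemma finite_setOf_blockSum_eq (s : Fin k → ℕ) :
    {u : ∀ i : Fin k, Fin (d i) → ℕ | blockSum u = s}.Finite :=
  (Set.finite_Iic fun i _ => s i).subset fun _ hu _ j =>
    hu ▸ Finset.single_le_sum (fun _ _ => Nat.zero_le _) (Finset.mem_univ j)

/-- `ℕ^m` ordered by `<_lex`: the last coordinate at which two exponents differ decides. -/
abbrev LexExp (d : Fin k → ℕ) :=
  Lex (∀ i : (Fin k)ᵒᵈ, Lex (∀ _ : (Fin (d (OrderDual.ofDual i)))ᵒᵈ, ℕ))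

def toLexExp (u : ∀ i : Fin k, Fin (d i) → ℕ) : LexExp d :=
  toLex fun i => toLex (u i)

lemma toLexExp_injective : Function.Injective (toLexExp (d := d)) :=
  fun _ _ h => h

lemma toLexExp_add (u v : ∀ i : Fin k, Fin (d i) → ℕ) :
    toLexExp (u + v) = toLexExp u + toLexExp v :=
  rfl

lemma lexLtOp_iff_toLexExp_lt {r u : ∀ i : Fin k, Fin (d i) → ℕ} :
    lexLtOp r u ↔ toLexExp r < toLexExp u := by
  constructor
  · rintro ⟨i, j, hlt, hj, hi⟩
    exact ⟨i, fun i' hi' => congrArg toLex (funext (hi i' hi')), j, hj, hlt⟩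
  · rintro ⟨i, hi, j, hj, hlt⟩
    exact ⟨i, j, hlt, hj, fun i' hi' j' => congrFun (hi i' hi') j'⟩

lemma strictMono_toLexExp_unitExp (i : Fin k) :
    StrictMono fun j : Fin (d i) => toLexExp (unitExp i j) := by
  intro j' j hj
  refine lexLtOp_iff_toLexExp_lt.1 ⟨i, j, ?_, fun j'' hj'' => ?_, fun i' hi' j'' => ?_⟩
  · simp [unitExp, hj.ne']
  · simp [unitExp, hj''.ne', (hj.trans hj'').ne']
  · simp [unitExp, hi'.ne']

end Exponents

section OpPow

variable {X : Type*} {k : ℕ} {d : Fin k → ℕ} (φ : ∀ i : Fin k, Fin (d i) → X → X)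

/-- `opPow φ u` is, by definition, the composite of the blocks `rowPow φ i (u i)`. -/
def rowPow (i : Fin k) (r : Fin (d i) → ℕ) : X → X :=
  (List.finRange (d i)).foldr (fun j g => (φ i j)^[r j] ∘ g) id

lemma rowPow_zero (i : Fin k) : rowPow φ i 0 = id :=
  List.foldr_comp_eq_id fun _ _ => rfl

lemma rowPow_single (i : Fin k) (j : Fin (d i)) (n : ℕ) :
    rowPow φ i (Pi.single j n) = (φ i j)^[n] :=
  List.foldr_comp_single (fun j n => (φ i j)^[n]) (fun _ => rfl) (List.nodup_finRange _)
    (List.mem_finRange j) n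

variable {φ}

lemma rowPow_add (hcomm : Commuting φ) (i : Fin k) (r s : Fin (d i) → ℕ) :
    rowPow φ i (r + s) = rowPow φ i r ∘ rowPow φ i s :=
  List.foldr_comp_add (fun j n => (φ i j)^[n]) (fun _ _ _ => Function.iterate_add _ _ _)
    (fun j j' _ _ => (hcomm i j i j').iterate_iterate _ _) _ r s

lemma commute_rowPow (hcomm : Commuting φ) (i i' : Fin k) (r : Fin (d i) → ℕ)
    (s : Fin (d i') → ℕ) : Function.Commute (rowPow φ i r) (rowPow φ i' s) :=
  Function.Commute.foldr_comp fun j' _ =>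
    (Function.Commute.foldr_comp fun j _ => (hcomm i' j' i j).iterate_iterate _ _).symm

lemma opPow_add (hcomm : Commuting φ) (u v : ∀ i : Fin k, Fin (d i) → ℕ) :
    opPow φ (u + v) = opPow φ u ∘ opPow φ v :=
  List.foldr_comp_add (rowPow φ) (rowPow_add hcomm) (commute_rowPow hcomm) _ u v

lemma opPow_unitExp (i : Fin k) (j : Fin (d i)) : opPow φ (unitExp i j) = φ i j :=
  (List.foldr_comp_single (rowPow φ) (rowPow_zero φ) (List.nodup_finRange k)
    (List.mem_finRange i) _).trans (rowPow_single φ i j 1)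

lemma opPow_add_unitExp (hcomm : Commuting φ) (u : ∀ i : Fin k, Fin (d i) → ℕ) (i : Fin k)
    (j : Fin (d i)) (x : X) : opPow φ (u + unitExp i j) x = φ i j (opPow φ u x) := by
  rw [add_comm, opPow_add hcomm, opPow_unitExp]
  rfl

end OpPow

section Images

variable {X : Type*} {k : ℕ} {d : Fin k → ℕ} {φ : ∀ i : Fin k, Fin (d i) → X → X}

lemma phiEq_eq_biUnion (s : Fin k → ℕ) (A : Set X) :
    PhiEq φ s A = ⋃ u ∈ {u | blockSum u = s}, opPow φ u '' A := by
  ext x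
  simp only [PhiEq, Set.mem_ofPred_eq, Set.mem_iUnion, Set.mem_image, funext_iff, blockSum]
  grind

lemma thetaU_eq_biUnion (u : ∀ i : Fin k, Fin (d i) → ℕ) (A : Set X) :
    ThetaU φ u A =
      ⋃ r ∈ {r | blockSum r = blockSum u ∧ toLexExp r < toLexExp u}, opPow φ r '' A := by
  ext x
  simp only [ThetaU, Set.mem_ofPred_eq, Set.mem_iUnion, Set.mem_image, funext_iff, blockSum,
    lexLtOp_iff_toLexExp_lt]
  grind

lemma image_phiEq_subset (hcomm : Commuting φ) (A : Set X) (i : Fin k) (s : Fin k → ℕ)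
    (j : Fin (d i)) :
    φ i j '' PhiEq φ s A ⊆ PhiEq φ (s + Pi.single i 1) A := by
  rw [phiEq_eq_biUnion, phiEq_eq_biUnion, image_iUnion₂]
  refine iUnion₂_subset fun r hr => ?_
  rintro _ ⟨_, ⟨a, ha, rfl⟩, rfl⟩
  refine mem_biUnion (x := r + unitExp i j) ?_ ⟨a, ha, opPow_add_unitExp hcomm r i j a⟩
  simp only [Set.mem_ofPred_eq, blockSum_add, blockSum_unitExp, hr.out]

lemma image_thetaU_subset (hcomm : Commuting φ) (A : Set X) (i : Fin k)
    (u : ∀ i : Fin k, Fin (d i) → ℕ) {j j' : Fin (d i)} (hj : j' ≤ j) :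
    φ i j' '' ThetaU φ u A ⊆ ThetaU φ (u + unitExp i j) A := by
  rw [thetaU_eq_biUnion, thetaU_eq_biUnion, image_iUnion₂]
  refine iUnion₂_subset fun r ⟨hr, hru⟩ => ?_
  rintro _ ⟨_, ⟨a, ha, rfl⟩, rfl⟩
  refine mem_biUnion (x := r + unitExp i j') ⟨?_, ?_⟩
    ⟨a, ha, opPow_add_unitExp hcomm r i j' a⟩
  · simp only [blockSum_add, blockSum_unitExp, hr]
  · rw [toLexExp_add, toLexExp_add]
    exact add_lt_add_of_lt_of_le hru ((strictMono_toLexExp_unitExp i).monotone hj)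

lemma image_opPow_subset_thetaU (hcomm : Commuting φ) (A : Set X) (i : Fin k)
    (u : ∀ i : Fin k, Fin (d i) → ℕ) {j j' : Fin (d i)} (hj : j' < j) :
    φ i j' '' (opPow φ u '' A) ⊆ ThetaU φ (u + unitExp i j) A := by
  rw [thetaU_eq_biUnion]
  rintro _ ⟨_, ⟨a, ha, rfl⟩, rfl⟩
  refine mem_biUnion (x := u + unitExp i j') ⟨?_, ?_⟩
    ⟨a, ha, opPow_add_unitExp hcomm u i j' a⟩
  · simp only [blockSum_add, blockSum_unitExp]
  · rw [toLexExp_add, toLexExp_add]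
    exact add_lt_add_right (strictMono_toLexExp_unitExp i hj) _

end Images

section Antitone

variable {k : ℕ} {d : Fin k → ℕ}

lemma antitone_of_add_unitExp_le {α : Type*} [Preorder α]
    {g : (∀ i : Fin k, Fin (d i) → ℕ) → α} (h : ∀ u i j, g (u + unitExp i j) ≤ g u) :
    Antitone g := by
  let P (v : ∀ i : Fin k, Fin (d i) → ℕ) : Prop := ∀ u, g (u + v) ≤ g u
  have hP0 : P 0 := fun u => by rw [add_zero]
  have hPadd (v w) (hv : P v) (hw : P w) : P (v + w) :=
    fun u => (add_assoc u v w ▸ hw (u + v)).trans (hv u)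
  have hPsingle (i : Fin k) (j : Fin (d i)) (n : ℕ) : P (Pi.single i (Pi.single j n)) := by
    induction n with
    | zero => simpa only [Pi.single_zero] using hP0
    | succ n ih => simpa only [unitExp, Pi.single_add] using hPadd _ _ ih (h · i j)
  have hP (v) : P v := by
    refine Pi.single_induction P v hP0 hPadd fun i w => ?_
    refine Pi.single_induction (fun w => P (Pi.single i w)) w (by simpa using hP0)
      (fun w w' hw hw' => by simpa only [Pi.single_add] using hPadd _ _ hw hw') (hPsingle i)
  intro u u' huu'
  simpa only [add_tsub_cancel_of_le huu'] using hP (u' - u) u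

end Antitone

section Dimension

variable {X : Type*} (M : FinMatroid X) {k : ℕ} {d : Fin k → ℕ}
  {φ : ∀ i : Fin k, Fin (d i) → X → X} {A : Set X} (B : Set X)

lemma fDim_add_unitExp_le (hcomm : Commuting φ) (htri : ∀ i, Triangular M (φ i))
    (hA : A.Finite) (u : ∀ i : Fin k, Fin (d i) → ℕ) (i : Fin k) (j : Fin (d i)) :
    fDim M φ A B (u + unitExp i j) ≤ fDim M φ A B u := by
  set D := ThetaU φ u A ∪ PhiEq φ (blockSum u) B
  set D' := ThetaU φ (u + unitExp i j) A ∪ PhiEq φ (blockSum (u + unitExp i j)) B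
  obtain ⟨C₀, hC₀⟩ := M.exists_isBasisOver D (hA.image (opPow φ u))
  have hC₀fin : C₀.Finite := (hA.image _).subset hC₀.1
  have hspan : ⋃ j' ∈ Finset.Iic j, φ i j' '' (D ∪ C₀) ⊆ D' ∪ φ i j '' C₀ := by
    refine iUnion₂_subset fun j' hj' => ?_
    have hj' : j' ≤ j := Finset.mem_Iic.1 hj'
    rw [image_union, image_union]
    refine union_subset (union_subset ?_ ?_) ?_
    · exact (image_thetaU_subset hcomm A i u hj').trans
        (subset_union_left.trans subset_union_left)
    · have himage := image_phiEq_subset hcomm B i (blockSum u) j'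
      rw [← blockSum_unitExp i j, ← blockSum_add] at himage
      exact himage.trans (subset_union_right.trans subset_union_left)
    · rcases hj'.lt_or_eq with hlt | rfl
      · exact (image_mono hC₀.1).trans ((image_opPow_subset_thetaU hcomm A i u hlt).trans
          (subset_union_left.trans subset_union_left))
      · exact subset_union_right
  calc fDim M φ A B (u + unitExp i j) ≤ (φ i j '' C₀).ncard := by
        refine M.rk_le_ncard (hA.image _) (hC₀fin.image _) ?_
        rintro _ ⟨a, ha, rfl⟩
        rw [opPow_add_unitExp hcomm]
        exact M.cl_mono hspan (htri i j _ _ (hC₀.2.2 ⟨a, ha, rfl⟩))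
    _ ≤ C₀.ncard := ncard_image_le hC₀fin
    _ = fDim M φ A B u := (hC₀.rk_eq (hA.image _)).symm

lemma fDim_antitone (hcomm : Commuting φ) (htri : ∀ i, Triangular M (φ i)) (hA : A.Finite) :
    Antitone (fDim M φ A B) :=
  antitone_of_add_unitExp_le (fDim_add_unitExp_le M B hcomm htri hA)

lemma finsum_fDim_eq (hA : A.Finite) (s : Fin k → ℕ) :
    ∑ᶠ u ∈ {u | blockSum u = s}, fDim M φ A B u = M.rk (PhiEq φ s A) (PhiEq φ s B) := by
  have hU := finite_setOf_blockSum_eq (d := d) s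
  have hunion : PhiEq φ s A = ⋃ u ∈ hU.toFinset, opPow φ u '' A := by
    simp only [phiEq_eq_biUnion, Set.Finite.mem_toFinset]
  rw [finsum_mem_eq_finite_toFinset_sum _ hU, hunion,
    M.rk_biUnion_eq_sum toLexExp_injective fun u => hA.image (opPow φ u)]
  refine Finset.sum_congr rfl fun u hu => ?_
  rw [hU.mem_toFinset] at hu
  rw [fDim, thetaU_eq_biUnion, union_comm]
  congr 2
  · exact congrArg (PhiEq φ · B) hu.out
  · ext x
    simp only [Set.mem_iUnion, Finset.mem_filter, hU.mem_toFinset, Set.mem_ofPred_eq, hu.out]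
    exact Iff.rfl

end Dimension

theorem statement8_general {X : Type*} (M : FinMatroid X) {k : ℕ} {d : Fin k → ℕ}
    (φ : ∀ i : Fin k, Fin (d i) → X → X) (hcomm : Commuting φ)
    (htri : ∀ i, Triangular M (φ i)) (A B : Set X) (hA : A.Finite) :
    (∀ u u' : ∀ i : Fin k, Fin (d i) → ℕ, (∀ i j, u i j ≤ u' i j) →
      fDim M φ A B u' ≤ fDim M φ A B u) ∧
    (∀ s : Fin k → ℕ,
      (∑ᶠ u ∈ {u : ∀ i : Fin k, Fin (d i) → ℕ | ∀ i, ∑ j, u i j = s i}, fDim M φ A B u)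
        = M.rk (PhiEq φ s A) (PhiEq φ s B)) :=
  ⟨fun _ _ hle => fDim_antitone M B hcomm htri hA hle,
    fun s => by simpa only [blockSum, funext_iff] using finsum_fDim_eq M B hA s⟩

/-- **Lemma 2.2.** If each `Φᵢ` is triangular and `A` is finite, then `f^Φ_{A|B}` is
decreasing for the product order on `ℕ^m`, and
`Σ_{‖ū‖ = s̄} f^Φ_{A|B}(ū) = rk(Φ^{(s̄)}(A) | Φ^{(s̄)}(B))` for every `s̄ ∈ ℕ^k`. -/
theorem statement8 {X : Type*} (M : FinMatroid X) {k : ℕ} (hk : 0 < k) {d : Fin k → ℕ}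
    (hd : ∀ i, 0 < d i) (φ : ∀ i : Fin k, Fin (d i) → X → X) (hcomm : Commuting φ)
    (htri : ∀ i, Triangular M (φ i)) (A B : Set X) (hA : A.Finite) :
    (∀ u u' : ∀ i : Fin k, Fin (d i) → ℕ, (∀ i j, u i j ≤ u' i j) →
      fDim M φ A B u' ≤ fDim M φ A B u) ∧
    (∀ s : Fin k → ℕ,
      (∑ᶠ u ∈ {u : ∀ i : Fin k, Fin (d i) → ℕ | ∀ i, ∑ j, u i j = s i}, fDim M φ A B u)
        = M.rk (PhiEq φ s A) (PhiEq φ s B)) :=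
  statement8_general M φ hcomm htri A B hA
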